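/- arXiv:2202.10217 — 9 statements merged into one kernel-verified Lean document; each statement's English description precedes it below -/
import Mathlib

section
/- Let X be a real number and let I, J, K be real numbers with K ≥ 0, I > 1, 0 ≤ J ≤ I, I(I−1)/2 + K·I + J ≤ X. Define K' = K + J(J−1)/(I(I−1)). Then (I, 0, K') is feasible, i.e. I(I−1)/2 + K'·I ≤ X, and its objective value is unchanged: K'·I(I−1)/2 = K·I(I−1)/2 + J(J−1)/2. -/
theorem stmt6 (X I J K : ℝ) (hK : 0 ≤ K) (hI : 1 < I) (hJ0 : 0 ≤ J)
    (hJI : J ≤ I) (hfeas : I * (I - 1) / 2 + K * I + J ≤ X) :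
    I * (I - 1) / 2 + (K + J * (J - 1) / (I * (I - 1))) * I ≤ X ∧
    (K + J * (J - 1) / (I * (I - 1))) * (I * (I - 1) / 2)
      = K * (I * (I - 1) / 2) + J * (J - 1) / 2 := by
  have hI0 : (0:ℝ) < I := by linarith
  have hI1 : (0:ℝ) < I - 1 := by linarith
  have hne : I * (I - 1) ≠ 0 := by positivity
  constructor
  · have key : J * (J - 1) / (I * (I - 1)) * I ≤ J := by
      rw [div_mul_eq_mul_div, div_le_iff₀ (by positivity)]
      have : J * (J - 1) ≤ J * (I - 1) := by nlinarith
      nlinarith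
    linarith
  · field_simp
end

section
/- Let X > 0 be a real number. For all real numbers I ≥ 0 and K ≥ 0 satisfying I(I−1)/2 + K·I ≤ X, one has K·I(I−1)/2 ≤ (√2/(3√3))·X^{3/2}. In other words, the optimum value of 𝒫''(X) is at most (√2/(3√3))·X^{3/2}. -/
theorem stmt7 (X I K : ℝ) (hX : 0 < X) (hI : 0 ≤ I) (hK : 0 ≤ K)
    (hfeas : I * (I - 1) / 2 + K * I ≤ X) :
    K * (I * (I - 1) / 2) ≤ Real.sqrt 2 / (3 * Real.sqrt 3) * X ^ ((3 : ℝ) / 2) := by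
  set s := Real.sqrt X with hs
  have hs0 : 0 ≤ s := Real.sqrt_nonneg X
  have hs2 : s ^ 2 = X := Real.sq_sqrt hX.le
  have hXpow : X ^ ((3 : ℝ) / 2) = s ^ 3 := by
    rw [hs, Real.sqrt_eq_rpow, ← Real.rpow_natCast (X ^ ((1:ℝ)/2)) 3, ← Real.rpow_mul hX.le]
    norm_num
  set t := Real.sqrt 6 with ht
  have ht0 : 0 ≤ t := Real.sqrt_nonneg 6
  have htpos : 0 < t := Real.sqrt_pos.mpr (by norm_num)
  have ht2 : t ^ 2 = 6 := Real.sq_sqrt (by norm_num)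
  have hc : Real.sqrt 2 / (3 * Real.sqrt 3) = t / 9 := by
    have h1 : Real.sqrt 3 * t = 3 * Real.sqrt 2 := by
      rw [ht, ← Real.sqrt_mul (by norm_num : (0:ℝ) ≤ 3), show (3:ℝ)*6 = 9*2 by norm_num,
        Real.sqrt_mul (by norm_num : (0:ℝ) ≤ 9), show Real.sqrt 9 = 3 by
          rw [show (9:ℝ) = 3^2 by norm_num, Real.sqrt_sq (by norm_num : (0:ℝ) ≤ 3)]]
    have h3 : (0:ℝ) < Real.sqrt 3 := Real.sqrt_pos.mpr (by norm_num)
    field_simp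
    nlinarith [h1, h3, Real.sqrt_nonneg 2]
  rw [hXpow, hc]
  rcases le_or_gt I 1 with hI1 | hI1
  · have hle : K * (I * (I - 1) / 2) ≤ 0 := by
      have h1 : I * (I - 1) ≤ 0 := mul_nonpos_of_nonneg_of_nonpos hI (by linarith)
      have := mul_nonpos_of_nonneg_of_nonpos hK (by linarith : I * (I - 1) / 2 ≤ 0)
      linarith
    have : 0 ≤ t / 9 * s ^ 3 := by positivity
    linarith
  · have ha : 0 ≤ (I - 1) / 2 := by linarith
    have hKI : K * I ≤ X - I * (I - 1) / 2 := by linarith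
    have step : K * (I * (I - 1) / 2) ≤ (X - I * (I - 1) / 2) * ((I - 1) / 2) := by
      have := mul_le_mul_of_nonneg_right hKI ha
      nlinarith [this]
    have hfac : 0 ≤ (t * (I - 1) - 2 * s) ^ 2 * (t * (I - 1) + 4 * s) := by
      apply mul_nonneg (sq_nonneg _)
      have : 0 ≤ t * (I - 1) := mul_nonneg ht0 (by linarith)
      linarith [mul_nonneg (by norm_num : (0:ℝ) ≤ 4) hs0]
    have hfac2 : 0 ≤ 6 * (t * (I - 1) ^ 3) - 12 * t * (I - 1) * s ^ 2 + 16 * s ^ 3 := by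
      have e : (t * (I - 1) - 2 * s) ^ 2 * (t * (I - 1) + 4 * s)
          = t ^ 2 * (t * (I - 1) ^ 3) - 12 * t * (I - 1) * s ^ 2 + 16 * s ^ 3 := by ring
      rw [e, ht2] at hfac
      exact hfac
    have h1 : t * ((s ^ 2 - I * (I - 1) / 2) * ((I - 1) / 2)) ≤ 2 / 3 * s ^ 3 := by
      nlinarith [hfac2, mul_nonneg ht0 (sq_nonneg (I - 1))]
    have hrhs : t * (t / 9 * s ^ 3) = 2 / 3 * s ^ 3 := by
      have e : t * (t / 9 * s ^ 3) = t ^ 2 * s ^ 3 / 9 := by ring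
      rw [e, ht2]; ring
    have key : (X - I * (I - 1) / 2) * ((I - 1) / 2) ≤ t / 9 * s ^ 3 := by
      rw [← hs2]
      exact le_of_mul_le_mul_left (by linarith) htpos
    linarith
end

section
/- Let X > 0 be a real number and set I* = 2/3 + √(1+6X)/3 and K* = (I* − 1/2)(1 − 1/I*). Then (I*, K*) is feasible for 𝒫''(X) with the constraint tight, i.e. I*(I*−1)/2 + K*·I* = X, its objective value equals K*·I*(I*−1)/2 = (1/108)(√(1+6X) − 1)²(2√(1+6X) + 1), and this value is the maximum of K·I(I−1)/2 over all reals I ≥ 0, K ≥ 0 with I(I−1)/2 + K·I ≤ X. -/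
/-- The optimal `I` for problem `𝒫''(X)`. -/
noncomputable def Istar (X : ℝ) : ℝ := 2 / 3 + Real.sqrt (1 + 6 * X) / 3

/-- The optimal `K` for problem `𝒫''(X)`. -/
noncomputable def Kstar (X : ℝ) : ℝ := (Istar X - 1 / 2) * (1 - 1 / Istar X)

theorem stmt8 (X : ℝ) (hX : 0 < X) :
    0 ≤ Istar X ∧ 0 ≤ Kstar X ∧
    Istar X * (Istar X - 1) / 2 + Kstar X * Istar X = X ∧
    Kstar X * (Istar X * (Istar X - 1) / 2)
      = 1 / 108 * (Real.sqrt (1 + 6 * X) - 1) ^ 2 * (2 * Real.sqrt (1 + 6 * X) + 1) ∧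
    IsGreatest
      {v : ℝ | ∃ I K : ℝ, 0 ≤ I ∧ 0 ≤ K ∧ I * (I - 1) / 2 + K * I ≤ X ∧
        v = K * (I * (I - 1) / 2)}
      (Kstar X * (Istar X * (Istar X - 1) / 2)) := by
  set s := Real.sqrt (1 + 6 * X) with hsdef
  have hs0 : (0:ℝ) ≤ 1 + 6 * X := by linarith
  have hs2 : s ^ 2 = 1 + 6 * X := Real.sq_sqrt hs0
  have hsnn : 0 ≤ s := Real.sqrt_nonneg _
  have hs1 : 1 < s := by nlinarith
  have hI : Istar X = (2 + s) / 3 := by rw [Istar]; ring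
  have hIpos : 0 < Istar X := by rw [hI]; linarith
  have hIone : 1 ≤ Istar X := by rw [hI]; linarith
  have hIne : Istar X ≠ 0 := ne_of_gt hIpos
  have hKI : Kstar X * Istar X = (Istar X - 1 / 2) * (Istar X - 1) := by
    rw [Kstar]; field_simp
  have hK0 : 0 ≤ Kstar X := by
    rw [Kstar]
    apply mul_nonneg (by linarith)
    have : 1 / Istar X ≤ 1 := by rw [div_le_one hIpos]; exact hIone
    linarith
  have hcon : Istar X * (Istar X - 1) / 2 + Kstar X * Istar X = X := by
    rw [hKI, hI]; linear_combination hs2 / 6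
  have hval : Kstar X * (Istar X * (Istar X - 1) / 2)
      = 1 / 108 * (s - 1) ^ 2 * (2 * s + 1) := by
    have h : Kstar X * (Istar X * (Istar X - 1) / 2)
        = Kstar X * Istar X * ((Istar X - 1) / 2) := by ring
    rw [h, hKI, hI]; ring
  refine ⟨le_of_lt hIpos, hK0, hcon, hval, ?_, ?_⟩
  · exact ⟨Istar X, Kstar X, le_of_lt hIpos, hK0, le_of_eq hcon, rfl⟩
  · rintro v ⟨I, K, hI0, hK0', hc, rfl⟩
    rw [hval]
    rcases le_or_gt I 1 with h1 | h1
    · have hle : K * I * (I - 1) ≤ 0 :=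
        mul_nonpos_of_nonneg_of_nonpos (mul_nonneg hK0' hI0) (by linarith)
      nlinarith [sq_nonneg (s - 1)]
    · nlinarith [mul_nonneg (sq_nonneg (I - (2 + s) / 3))
          (show (0:ℝ) ≤ I + 2 * (s - 1) / 3 by nlinarith),
        mul_nonneg (show (0:ℝ) ≤ 2 * X - I ^ 2 + I - 2 * K * I by nlinarith)
          (show (0:ℝ) ≤ I - 1 by linarith), hs2, hX]
end

section
/- For every real X ≥ 0, one has (1/108)·(√(1+6X) − 1)²·(2√(1+6X) + 1) ≤ (√2/(3√3))·X^{3/2}. -/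
theorem stmt9 (X : ℝ) (hX : 0 ≤ X) :
    1 / 108 * (Real.sqrt (1 + 6 * X) - 1) ^ 2 * (2 * Real.sqrt (1 + 6 * X) + 1)
      ≤ Real.sqrt 2 / (3 * Real.sqrt 3) * X ^ ((3 : ℝ) / 2) := by
  set t := Real.sqrt (1 + 6 * X) with htdef
  have ht2 : t ^ 2 = 1 + 6 * X := Real.sq_sqrt (by linarith)
  have ht1 : 1 ≤ t := by
    rw [show (1:ℝ) = Real.sqrt 1 by simp [Real.sqrt_one], htdef]
    exact Real.sqrt_le_sqrt (by linarith)
  set a := Real.sqrt X with hadef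
  have ha2 : a ^ 2 = X := Real.sq_sqrt hX
  have ha0 : 0 ≤ a := Real.sqrt_nonneg X
  have hX32 : X ^ ((3 : ℝ) / 2) = a ^ 3 := by
    rw [hadef, show ((3:ℝ)/2) = (1/2 : ℝ) * (3:ℕ) by norm_num,
      Real.rpow_mul hX, Real.rpow_natCast, ← Real.sqrt_eq_rpow]
  rw [hX32]
  have hs2 : Real.sqrt 2 ^ 2 = 2 := Real.sq_sqrt (by norm_num)
  have hs3 : Real.sqrt 3 ^ 2 = 3 := Real.sq_sqrt (by norm_num)
  have hs3pos : 0 < Real.sqrt 3 := Real.sqrt_pos.mpr (by norm_num)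
  have hs2pos : 0 < Real.sqrt 2 := Real.sqrt_pos.mpr (by norm_num)
  have hrw : Real.sqrt 2 / (3 * Real.sqrt 3) = Real.sqrt 2 * Real.sqrt 3 / 9 := by
    rw [div_eq_div_iff (by positivity) (by norm_num)]
    nlinarith [hs3, hs3pos]
  rw [hrw]
  set s := Real.sqrt 2 * Real.sqrt 3 with hsdef
  have hs6 : s ^ 2 = 6 := by rw [hsdef, mul_pow, hs2, hs3]; norm_num
  have hs0 : 0 ≤ s := by positivity
  have ha2' : 6 * a ^ 2 = t ^ 2 - 1 := by rw [ha2, ht2]; ring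
  have hL0 : 0 ≤ (t - 1) ^ 2 * (2 * t + 1) := by nlinarith
  have key : ((t - 1) ^ 2 * (2 * t + 1)) ^ 2 ≤ (12 * s * a ^ 3) ^ 2 := by
    have h1 : (12 * s * a ^ 3) ^ 2 = 4 * (t ^ 2 - 1) ^ 3 := by
      have : (12 * s * a ^ 3) ^ 2 = 144 * s ^ 2 * (a ^ 2) ^ 3 := by ring
      rw [this, hs6]
      have h2 : (a ^ 2) ^ 3 = ((t ^ 2 - 1) / 6) ^ 3 := by
        rw [show a ^ 2 = (t ^ 2 - 1) / 6 by linarith]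
      rw [h2]; ring
    rw [h1]
    nlinarith [mul_nonneg (pow_nonneg (by linarith : (0:ℝ) ≤ t - 1) 3)
      (by nlinarith : (0:ℝ) ≤ 12 * t ^ 2 + 15 * t + 5),
      pow_nonneg (by linarith : (0:ℝ) ≤ t - 1) 3, sq_nonneg t]
  have hR0 : 0 ≤ 12 * s * a ^ 3 := by positivity
  have hfin : (t - 1) ^ 2 * (2 * t + 1) ≤ 12 * s * a ^ 3 := by
    have := Real.sqrt_le_sqrt key
    rwa [Real.sqrt_sq hL0, Real.sqrt_sq hR0] at this
  linarith
end

section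
/- Let N, M be positive integers and X a positive real. For every finite subset H of the SYRK operation set 𝒮 = { (i, j, k) : 1 ≤ j < i ≤ N, 1 ≤ k ≤ M } whose number of data accesses satisfies D(H) ≤ X, one has |H| ≤ (√2/(3√3))·X^{3/2}. -/
/-- The symmetric footprint of a finite set `U ⊆ ℕ × ℕ`. -/
def footprint (U : Finset (ℕ × ℕ)) : Finset ℕ :=
  U.image Prod.fst ∪ U.image Prod.snd

/-- The restriction of a set of operations `H ⊆ ℕ³` to iteration `k`. -/
def restrict (H : Finset (ℕ × ℕ × ℕ)) (k : ℕ) : Finset (ℕ × ℕ) :=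
  (H.filter fun t => t.2.2 = k).image fun t => (t.1, t.2.1)

/-- The number of data accessed by a set of operations `H`. -/
def Dacc (H : Finset (ℕ × ℕ × ℕ)) : ℕ :=
  (H.image fun t => (t.1, t.2.1)).card +
    ∑ k ∈ H.image (fun t => t.2.2), (footprint (restrict H k)).card

theorem stmt10 (N M : ℕ) (hN : 0 < N) (hM : 0 < M) (X : ℝ) (hX : 0 < X)
    (H : Finset (ℕ × ℕ × ℕ))
    (hH : ∀ t ∈ H, 1 ≤ t.2.1 ∧ t.2.1 < t.1 ∧ t.1 ≤ N ∧ 1 ≤ t.2.2 ∧ t.2.2 ≤ M)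
    (hD : (Dacc H : ℝ) ≤ X) :
    (H.card : ℝ) ≤ Real.sqrt 2 / (3 * Real.sqrt 3) * X ^ ((3 : ℝ) / 2) := by
  classical
  set A : ℕ := (H.image fun t => (t.1, t.2.1)).card with hAdef
  set K : Finset ℕ := H.image (fun t => t.2.2) with hKdef
  -- card decomposition
  have hcard : H.card = ∑ k ∈ K, (restrict H k).card := by
    rw [Finset.card_eq_sum_card_fiberwise
      (f := fun t : ℕ × ℕ × ℕ => t.2.2) (t := K)
      (fun t ht => Finset.mem_image_of_mem _ ht)]
    refine Finset.sum_congr rfl fun k hk => ?_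
    rw [restrict, Finset.card_image_of_injOn]
    intro a ha b hb hab
    simp only [Finset.coe_filter, Set.mem_setOf_eq] at ha hb
    simp only [Prod.mk.injEq] at hab
    exact Prod.ext hab.1 (Prod.ext hab.2 (ha.2.trans hb.2.symm))
  -- each restriction is a subset of the full projection
  have hsubA : ∀ k, (restrict H k).card ≤ A := fun k =>
    Finset.card_le_card (Finset.image_subset_image (Finset.filter_subset _ _))
  -- footprint bound
  have hfb : ∀ k, 2 * (restrict H k).card ≤ (footprint (restrict H k)).card ^ 2 := by
    intro k
    set S := restrict H k with hSdef
    set F := footprint S with hFdef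
    have hmem : ∀ p ∈ S, p.1 ∈ F ∧ p.2 ∈ F := by
      intro p hp
      exact ⟨Finset.mem_union_left _ (Finset.mem_image_of_mem _ hp),
        Finset.mem_union_right _ (Finset.mem_image_of_mem _ hp)⟩
    have hlt : ∀ p ∈ S, p.2 < p.1 := by
      intro p hp
      rw [hSdef, restrict] at hp
      simp only [Finset.mem_image, Finset.mem_filter] at hp
      obtain ⟨t, ⟨htH, -⟩, rfl⟩ := hp
      exact (hH t htH).2.1
    have hdisj : Disjoint S (S.image Prod.swap) := by
      rw [Finset.disjoint_left]
      intro p hp hp'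
      obtain ⟨q, hq, hqp⟩ := Finset.mem_image.mp hp'
      have h1 := hlt p hp
      have h2 := hlt q hq
      rw [← hqp] at h1
      simp only [Prod.swap] at h1
      omega
    have hsub : S ∪ S.image Prod.swap ⊆ F ×ˢ F := by
      intro p hp
      rcases Finset.mem_union.mp hp with h | h
      · exact Finset.mem_product.mpr ⟨(hmem p h).1, (hmem p h).2⟩
      · obtain ⟨q, hq, rfl⟩ := Finset.mem_image.mp h
        exact Finset.mem_product.mpr ⟨(hmem q hq).2, (hmem q hq).1⟩
    calc 2 * S.card = S.card + (S.image Prod.swap).card := by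
          rw [Finset.card_image_of_injective _ Prod.swap_injective]; ring
      _ = (S ∪ S.image Prod.swap).card := (Finset.card_union_of_disjoint hdisj).symm
      _ ≤ (F ×ˢ F).card := Finset.card_le_card hsub
      _ = F.card ^ 2 := by rw [Finset.card_product, sq]
  -- real part
  set f : ℕ → ℝ := fun k => ((footprint (restrict H k)).card : ℝ) with hfdef
  have hf0 : ∀ k, 0 ≤ f k := fun k => Nat.cast_nonneg _
  have hDacc : (Dacc H : ℝ) = (A : ℝ) + ∑ k ∈ K, f k := by
    rw [Dacc]
    push_cast
    rfl
  have hsumf0 : 0 ≤ ∑ k ∈ K, f k := Finset.sum_nonneg fun k _ => hf0 k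
  have hAX : (A : ℝ) ≤ X := by linarith [hDacc ▸ hD]
  have hsumf : ∑ k ∈ K, f k ≤ X - A := by linarith [hDacc ▸ hD]
  have hA0 : (0 : ℝ) ≤ (A : ℝ) := Nat.cast_nonneg _
  have hb0 : (0 : ℝ) ≤ X - A := le_trans hsumf0 hsumf
  have hck : ∀ k ∈ K, ((restrict H k).card : ℝ) ≤ Real.sqrt ((A : ℝ) / 2) * f k := by
    intro k _
    have hc0 : (0 : ℝ) ≤ ((restrict H k).card : ℝ) := Nat.cast_nonneg _
    have h1 : ((restrict H k).card : ℝ) ≤ (A : ℝ) := by exact_mod_cast hsubA k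
    have h2 : 2 * ((restrict H k).card : ℝ) ≤ f k ^ 2 := by
      show 2 * ((restrict H k).card : ℝ) ≤ ((footprint (restrict H k)).card : ℝ) ^ 2
      exact_mod_cast hfb k
    have hsq : ((restrict H k).card : ℝ) ^ 2 ≤ ((A : ℝ) / 2) * f k ^ 2 := by nlinarith
    calc ((restrict H k).card : ℝ) = Real.sqrt (((restrict H k).card : ℝ) ^ 2) :=
          (Real.sqrt_sq hc0).symm
      _ ≤ Real.sqrt (((A : ℝ) / 2) * f k ^ 2) := Real.sqrt_le_sqrt hsq
      _ = Real.sqrt ((A : ℝ) / 2) * f k := by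
          rw [Real.sqrt_mul (by positivity), Real.sqrt_sq (hf0 k)]
  have hmain : (H.card : ℝ) ≤ Real.sqrt ((A : ℝ) / 2) * (X - A) := by
    have hHc : (H.card : ℝ) = ∑ k ∈ K, ((restrict H k).card : ℝ) := by
      rw [hcard]; push_cast; rfl
    calc (H.card : ℝ) = ∑ k ∈ K, ((restrict H k).card : ℝ) := hHc
      _ ≤ ∑ k ∈ K, Real.sqrt ((A : ℝ) / 2) * f k := Finset.sum_le_sum hck
      _ = Real.sqrt ((A : ℝ) / 2) * ∑ k ∈ K, f k := (Finset.mul_sum _ _ _).symm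
      _ ≤ Real.sqrt ((A : ℝ) / 2) * (X - A) :=
          mul_le_mul_of_nonneg_left hsumf (Real.sqrt_nonneg _)
  -- closing inequality
  set R : ℝ := Real.sqrt 2 / (3 * Real.sqrt 3) * X ^ ((3 : ℝ) / 2) with hRdef
  have hR0 : 0 ≤ R := by
    apply mul_nonneg
    · positivity
    · exact Real.rpow_nonneg hX.le _
  have hXp : (X ^ ((3 : ℝ) / 2)) ^ 2 = X ^ 3 := by
    rw [← Real.rpow_natCast (X ^ ((3 : ℝ) / 2)) 2, ← Real.rpow_mul hX.le]
    rw [show (3 : ℝ) / 2 * (2 : ℕ) = ((3 : ℕ) : ℝ) by push_cast; ring, Real.rpow_natCast]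
  have hR2 : R ^ 2 = 2 / 27 * X ^ 3 := by
    rw [hRdef, mul_pow, div_pow, mul_pow, Real.sq_sqrt (by norm_num : (0:ℝ) ≤ 2),
      Real.sq_sqrt (by norm_num : (0:ℝ) ≤ 3), hXp]
    norm_num
  have hfinal : Real.sqrt ((A : ℝ) / 2) * (X - A) ≤ R := by
    set a : ℝ := (A : ℝ)
    have hL0 : 0 ≤ Real.sqrt (a / 2) * (X - a) := mul_nonneg (Real.sqrt_nonneg _) hb0
    have hsq : (Real.sqrt (a / 2) * (X - a)) ^ 2 ≤ R ^ 2 := by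
      rw [mul_pow, Real.sq_sqrt (by positivity), hR2]
      have key : 0 ≤ (2 * a - (X - a)) ^ 2 * (a + 4 * (X - a)) :=
        mul_nonneg (sq_nonneg _) (by linarith)
      nlinarith [key]
    calc Real.sqrt (a / 2) * (X - a)
        = Real.sqrt ((Real.sqrt (a / 2) * (X - a)) ^ 2) := (Real.sqrt_sq hL0).symm
      _ ≤ Real.sqrt (R ^ 2) := Real.sqrt_le_sqrt hsq
      _ = R := Real.sqrt_sq hR0
  exact hmain.trans hfinal
end

section
/- Let N be a positive integer and X a positive real. For every finite subset H of the Cholesky update operation set 𝒞 = { (i, j, k) : 1 ≤ k < j < i ≤ N } whose number of data accesses satisfies D(H) ≤ X, one has |H| ≤ (√2/(3√3))·X^{3/2}. -/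
theorem stmt11 (N : ℕ) (hN : 0 < N) (X : ℝ) (hX : 0 < X)
    (H : Finset (ℕ × ℕ × ℕ))
    (hH : ∀ t ∈ H, 1 ≤ t.2.2 ∧ t.2.2 < t.2.1 ∧ t.2.1 < t.1 ∧ t.1 ≤ N)
    (hD : (Dacc H : ℝ) ≤ X) :
    (H.card : ℝ) ≤ Real.sqrt 2 / (3 * Real.sqrt 3) * X ^ ((3 : ℝ) / 2) := by
  classical
  set K := H.image (fun t => t.2.2) with hK
  set A : ℕ := (H.image fun t => (t.1, t.2.1)).card with hA
  set f : ℕ → ℕ := fun k => (footprint (restrict H k)).card with hf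
  -- Step 1: |H| = ∑_{k∈K} |restrict H k|
  have hcard : H.card = ∑ k ∈ K, (restrict H k).card := by
    have h1 : H.card = ∑ k ∈ K, (H.filter fun t => t.2.2 = k).card :=
      Finset.card_eq_sum_card_fiberwise (fun t ht => Finset.mem_image_of_mem _ ht)
    have h2 : ∀ k, (restrict H k).card = (H.filter fun t => t.2.2 = k).card := by
      intro k
      apply Finset.card_image_of_injOn
      rintro ⟨a1, a2, a3⟩ ha ⟨b1, b2, b3⟩ hb hab
      simp only [Finset.mem_coe, Finset.mem_filter] at ha hb
      simp only [Prod.mk.injEq] at hab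
      simp [Prod.ext_iff, hab.1, hab.2, ha.2, hb.2]
    rw [h1]
    exact Finset.sum_congr rfl fun k _ => (h2 k).symm
  -- Step 2: |restrict H k| ≤ A
  have hAk : ∀ k, (restrict H k).card ≤ A := by
    intro k
    apply Finset.card_le_card
    exact Finset.image_subset_image (Finset.filter_subset _ _)
  -- pairs in restrict H k are strictly triangular
  have hlt : ∀ k, ∀ p ∈ restrict H k, p.2 < p.1 := by
    intro k p hp
    simp only [restrict, Finset.mem_image, Finset.mem_filter] at hp
    obtain ⟨t, ⟨htH, -⟩, rfl⟩ := hp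
    exact (hH t htH).2.2.1
  -- Step 3: 2 * |restrict H k| ≤ f k ^ 2
  have htri : ∀ k, 2 * (restrict H k).card ≤ f k ^ 2 := by
    intro k
    set U := restrict H k with hU
    set F := footprint U with hF
    have hUF : U ⊆ F ×ˢ F := by
      intro p hp
      rw [Finset.mem_product]
      constructor
      · exact Finset.mem_union_left _ (Finset.mem_image_of_mem _ hp)
      · exact Finset.mem_union_right _ (Finset.mem_image_of_mem _ hp)
    have hUF' : U.image Prod.swap ⊆ F ×ˢ F := by
      intro p hp
      obtain ⟨q, hq, rfl⟩ := Finset.mem_image.mp hp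
      rw [Finset.mem_product]
      constructor
      · exact Finset.mem_union_right _ (Finset.mem_image_of_mem _ hq)
      · exact Finset.mem_union_left _ (Finset.mem_image_of_mem _ hq)
    have hdisj : Disjoint U (U.image Prod.swap) := by
      rw [Finset.disjoint_left]
      intro p hp hp'
      obtain ⟨q, hq, rfl⟩ := Finset.mem_image.mp hp'
      exact absurd (hlt k _ hp) (not_lt.mpr (hlt k q hq).le)
    calc 2 * U.card = U.card + (U.image Prod.swap).card := by
          rw [Finset.card_image_of_injective _ Prod.swap_injective]; ring
      _ = (U ∪ U.image Prod.swap).card := (Finset.card_union_of_disjoint hdisj).symm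
      _ ≤ (F ×ˢ F).card := Finset.card_le_card (Finset.union_subset hUF hUF')
      _ = F.card ^ 2 := by rw [Finset.card_product]; ring
  -- real quantities
  set S : ℝ := ∑ k ∈ K, (f k : ℝ) with hS
  have hSnn : 0 ≤ S := Finset.sum_nonneg fun k _ => by positivity
  have hAnn : (0:ℝ) ≤ (A:ℝ) := Nat.cast_nonneg _
  have hDX : (A:ℝ) + S ≤ X := by
    have h : (Dacc H : ℝ) = (A:ℝ) + S := by
      simp only [Dacc, hS, hA, hK, hf]
      push_cast
      ring
    linarith [h ▸ hD]
  -- Step 4: per-k bound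
  have hk : ∀ k ∈ K, ((restrict H k).card : ℝ) ≤ Real.sqrt ((A:ℝ)/2) * (f k : ℝ) := by
    intro k _
    have hx1 : ((restrict H k).card : ℝ) ≤ (A:ℝ) := by exact_mod_cast hAk k
    have hx2 : 2 * ((restrict H k).card : ℝ) ≤ (f k : ℝ) ^ 2 := by exact_mod_cast htri k
    set x : ℝ := ((restrict H k).card : ℝ) with hx
    have hxnn : 0 ≤ x := Nat.cast_nonneg _
    have hsq : x ^ 2 ≤ (A:ℝ)/2 * (f k : ℝ) ^ 2 := by nlinarith
    calc x = Real.sqrt (x ^ 2) := (Real.sqrt_sq hxnn).symm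
      _ ≤ Real.sqrt ((A:ℝ)/2 * (f k : ℝ) ^ 2) := Real.sqrt_le_sqrt hsq
      _ = Real.sqrt ((A:ℝ)/2) * (f k : ℝ) := by
          rw [Real.sqrt_mul (by positivity), Real.sqrt_sq (by positivity)]
  -- Step 5: |H| ≤ √(A/2) * S
  have hmain : (H.card : ℝ) ≤ Real.sqrt ((A:ℝ)/2) * S := by
    rw [hcard]
    push_cast
    rw [hS, Finset.mul_sum]
    exact Finset.sum_le_sum hk
  -- Step 6: √(A/2) * S ≤ √2/(3√3) * X^(3/2)
  have hAX : (A:ℝ) ≤ X := by linarith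
  have hpoly : (A:ℝ) * S ^ 2 ≤ 4 * X ^ 3 / 27 := by
    have hcube : ((A:ℝ) + S) ^ 3 ≤ X ^ 3 := by
      apply pow_le_pow_left₀ (by linarith) hDX
    nlinarith [mul_nonneg (sq_nonneg (2*(A:ℝ) - S)) (show (0:ℝ) ≤ (A:ℝ) + 4*S by linarith)]
  have hLHS : Real.sqrt ((A:ℝ)/2) * S = Real.sqrt ((A:ℝ) * S ^ 2 / 2) := by
    rw [show (A:ℝ) * S ^ 2 / 2 = (A:ℝ)/2 * S ^ 2 by ring,
      Real.sqrt_mul (by positivity), Real.sqrt_sq hSnn]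
  have hRHS : Real.sqrt 2 / (3 * Real.sqrt 3) * X ^ ((3:ℝ)/2) = Real.sqrt (2 * X ^ 3 / 27) := by
    have h27 : (3:ℝ) * Real.sqrt 3 = Real.sqrt 27 := by
      rw [show (27:ℝ) = 3^2 * 3 by norm_num, Real.sqrt_mul (by positivity),
        Real.sqrt_sq (by norm_num)]
    have hX32 : X ^ ((3:ℝ)/2) = Real.sqrt (X ^ 3) := by
      rw [show ((3:ℝ)/2) = (3:ℝ) * (1/2) by ring, Real.rpow_mul hX.le,
        show (3:ℝ) = ((3:ℕ):ℝ) by norm_num, Real.rpow_natCast,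
        Real.sqrt_eq_rpow]
    rw [h27, hX32, div_mul_eq_mul_div, ← Real.sqrt_mul (by norm_num),
      ← Real.sqrt_div (by positivity)]
  calc (H.card : ℝ) ≤ Real.sqrt ((A:ℝ)/2) * S := hmain
    _ = Real.sqrt ((A:ℝ) * S ^ 2 / 2) := hLHS
    _ ≤ Real.sqrt (2 * X ^ 3 / 27) := Real.sqrt_le_sqrt (by linarith)
    _ = Real.sqrt 2 / (3 * Real.sqrt 3) * X ^ ((3:ℝ)/2) := hRHS.symm
end

section
/- Let N, M be positive integers and S a positive real. Every finite subset H of the SYRK operation set 𝒮 = { (i, j, k) : 1 ≤ j < i ≤ N, 1 ≤ k ≤ M } whose number of data accesses satisfies D(H) ≤ 3S has cardinality |H| ≤ √2 · S^{3/2}. -/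
lemma mem_footprint_fst {U : Finset (ℕ × ℕ)} {p : ℕ × ℕ} (hp : p ∈ U) :
    p.1 ∈ footprint U :=
  Finset.mem_union_left _ (Finset.mem_image_of_mem _ hp)

lemma mem_footprint_snd {U : Finset (ℕ × ℕ)} {p : ℕ × ℕ} (hp : p ∈ U) :
    p.2 ∈ footprint U :=
  Finset.mem_union_right _ (Finset.mem_image_of_mem _ hp)

lemma two_card_le (U : Finset (ℕ × ℕ)) (h : ∀ p ∈ U, p.2 < p.1) :
    2 * U.card ≤ (footprint U).card ^ 2 := by
  have hdisj : Disjoint U (U.image Prod.swap) := by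
    rw [Finset.disjoint_left]
    intro p hp hp'
    obtain ⟨q, hq, hpq⟩ := Finset.mem_image.mp hp'
    have h1 := h p hp
    have h2 := h q hq
    rw [← hpq] at h1
    simp [Prod.swap] at h1
    omega
  have hsub : U ∪ U.image Prod.swap ⊆ footprint U ×ˢ footprint U := by
    intro p hp
    rcases Finset.mem_union.mp hp with hp | hp
    · exact Finset.mem_product.mpr ⟨mem_footprint_fst hp, mem_footprint_snd hp⟩
    · obtain ⟨q, hq, hpq⟩ := Finset.mem_image.mp hp
      rw [← hpq]
      exact Finset.mem_product.mpr ⟨mem_footprint_snd hq, mem_footprint_fst hq⟩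
  calc 2 * U.card = U.card + (U.image Prod.swap).card := by
        rw [Finset.card_image_of_injective _ Prod.swap_injective]; ring
    _ = (U ∪ U.image Prod.swap).card := (Finset.card_union_of_disjoint hdisj).symm
    _ ≤ (footprint U ×ˢ footprint U).card := Finset.card_le_card hsub
    _ = (footprint U).card ^ 2 := by rw [Finset.card_product]; ring

theorem stmt12 (N M : ℕ) (hN : 0 < N) (hM : 0 < M) (S : ℝ) (hS : 0 < S)
    (H : Finset (ℕ × ℕ × ℕ))
    (hH : ∀ t ∈ H, 1 ≤ t.2.1 ∧ t.2.1 < t.1 ∧ t.1 ≤ N ∧ 1 ≤ t.2.2 ∧ t.2.2 ≤ M)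
    (hD : (Dacc H : ℝ) ≤ 3 * S) :
    (H.card : ℝ) ≤ Real.sqrt 2 * S ^ ((3 : ℝ) / 2) := by
  classical
  set P : Finset (ℕ × ℕ) := H.image fun t => (t.1, t.2.1) with hPdef
  set K : Finset ℕ := H.image fun t => t.2.2 with hKdef
  set A : ℝ := (P.card : ℝ) with hAdef
  have hA0 : 0 ≤ A := Nat.cast_nonneg _
  -- A ≤ Dacc H and Σ footprints ≤ 3S - A
  have hDacc : (Dacc H : ℝ) = A + ∑ k ∈ K, ((footprint (restrict H k)).card : ℝ) := by
    simp [Dacc, hAdef, hPdef, hKdef, Nat.cast_sum]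
  have hFsum : ∑ k ∈ K, ((footprint (restrict H k)).card : ℝ) ≤ 3 * S - A := by
    rw [hDacc] at hD; linarith
  have hA3S : A ≤ 3 * S := by
    have : (0:ℝ) ≤ ∑ k ∈ K, ((footprint (restrict H k)).card : ℝ) :=
      Finset.sum_nonneg fun _ _ => Nat.cast_nonneg _
    linarith
  -- card decomposition
  have hcard : H.card = ∑ k ∈ K, (restrict H k).card := by
    have h1 : H.card = ∑ k ∈ K, (H.filter fun t => t.2.2 = k).card :=
      Finset.card_eq_sum_card_fiberwise fun t ht => Finset.mem_image_of_mem _ ht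
    rw [h1]
    refine Finset.sum_congr rfl fun k _ => ?_
    rw [restrict, Finset.card_image_of_injOn]
    intro t ht t' ht' he
    simp only [Finset.mem_coe, Finset.mem_filter] at ht ht'
    have : t.1 = t'.1 ∧ t.2.1 = t'.2.1 := Prod.mk.inj he
    obtain ⟨e1, e2⟩ := this
    exact Prod.ext e1 (Prod.ext e2 (ht.2.trans ht'.2.symm))
  -- per-k bound
  have hperk : ∀ k ∈ K, ((restrict H k).card : ℝ) ≤
      Real.sqrt (A / 2) * ((footprint (restrict H k)).card : ℝ) := by
    intro k _
    set U := restrict H k with hU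
    have hUsub : U ⊆ P := by
      intro p hp
      obtain ⟨t, ht, hpt⟩ := Finset.mem_image.mp hp
      exact hpt ▸ Finset.mem_image_of_mem _ (Finset.mem_filter.mp ht).1
    have hUA : (U.card : ℝ) ≤ A := by
      rw [hAdef]; exact_mod_cast Finset.card_le_card hUsub
    have hUlt : ∀ p ∈ U, p.2 < p.1 := by
      intro p hp
      obtain ⟨t, ht, hpt⟩ := Finset.mem_image.mp hp
      have := (hH t (Finset.mem_filter.mp ht).1).2.1
      rw [← hpt]; exact this
    have h2c : (2 : ℝ) * U.card ≤ ((footprint U).card : ℝ) ^ 2 := by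
      exact_mod_cast two_card_le U hUlt
    set f : ℝ := ((footprint U).card : ℝ) with hf
    have hf0 : 0 ≤ f := Nat.cast_nonneg _
    have hsq : ((U.card : ℝ)) ^ 2 ≤ (Real.sqrt (A / 2) * f) ^ 2 := by
      have : (Real.sqrt (A / 2)) ^ 2 = A / 2 := Real.sq_sqrt (by linarith)
      rw [mul_pow, this]
      nlinarith [Nat.cast_nonneg (α := ℝ) U.card]
    have h := Real.sqrt_le_sqrt hsq
    rwa [Real.sqrt_sq (Nat.cast_nonneg _),
      Real.sqrt_sq (mul_nonneg (Real.sqrt_nonneg _) hf0)] at h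
  -- assemble
  have hsum : (H.card : ℝ) ≤ Real.sqrt (A / 2) * (3 * S - A) := by
    have h1 : (H.card : ℝ) = ∑ k ∈ K, ((restrict H k).card : ℝ) := by
      rw [hcard]; push_cast; ring
    rw [h1]
    calc ∑ k ∈ K, ((restrict H k).card : ℝ)
        ≤ ∑ k ∈ K, Real.sqrt (A / 2) * ((footprint (restrict H k)).card : ℝ) :=
          Finset.sum_le_sum hperk
      _ = Real.sqrt (A / 2) * ∑ k ∈ K, ((footprint (restrict H k)).card : ℝ) := by
          rw [Finset.mul_sum]
      _ ≤ Real.sqrt (A / 2) * (3 * S - A) :=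
          mul_le_mul_of_nonneg_left hFsum (Real.sqrt_nonneg _)
  refine hsum.trans ?_
  -- final: sqrt(A/2)*(3S-A) ≤ sqrt 2 * S^(3/2)
  have hR2 : (Real.sqrt 2 * S ^ ((3:ℝ)/2)) ^ 2 = 2 * S ^ 3 := by
    rw [mul_pow, Real.sq_sqrt (by norm_num : (0:ℝ) ≤ 2)]
    congr 1
    rw [← Real.rpow_natCast (S ^ ((3:ℝ)/2)) 2, ← Real.rpow_mul hS.le,
      ← Real.rpow_natCast S 3]
    norm_num
  have hL2 : (Real.sqrt (A / 2) * (3 * S - A)) ^ 2 = A / 2 * (3 * S - A) ^ 2 := by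
    rw [mul_pow, Real.sq_sqrt (by linarith)]
  have hkey : A / 2 * (3 * S - A) ^ 2 ≤ 2 * S ^ 3 := by
    nlinarith [mul_nonneg (sq_nonneg (A - S)) (by linarith : (0:ℝ) ≤ 4 * S - A)]
  have hL0 : 0 ≤ Real.sqrt (A / 2) * (3 * S - A) :=
    mul_nonneg (Real.sqrt_nonneg _) (by linarith)
  have hR0 : 0 ≤ Real.sqrt 2 * S ^ ((3:ℝ)/2) :=
    mul_nonneg (Real.sqrt_nonneg _) (Real.rpow_nonneg hS.le _)
  nlinarith [hL2, hR2, hkey, hL0, hR0, sq_nonneg (Real.sqrt (A/2) * (3*S-A) - Real.sqrt 2 * S ^ ((3:ℝ)/2))]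
end

section
/- Let c, k be integers with c ≥ k − 1 ≥ 1 and such that c is coprime with every integer in {2, …, k−2}. Then the cyclic (c, k)-indexing family f_c, defined by f_c^{i,j}(0) = j and f_c^{i,j}(u) = (i + j(u−1)) mod c for 1 ≤ u ≤ k−1, is valid. -/
/-- The cyclic `(c, k)`-indexing family: `f_c^{i,j}(0) = j` and
`f_c^{i,j}(u) = (i + j (u - 1)) mod c` for `u ≥ 1`. -/
def fcyc (c i j u : ℕ) : ℕ := if u = 0 then j else (i + j * (u - 1)) % c

lemma keyeq (c : ℕ) (a b : ℤ) (ha : 0 ≤ a) (ha' : a < c) (hb : 0 ≤ b) (hb' : b < c)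
    (h : (c:ℤ) ∣ a - b) : a = b := by
  have habs : |a - b| < c := abs_sub_lt_iff.mpr ⟨by linarith, by linarith⟩
  have := Int.eq_zero_of_abs_lt_dvd h habs
  linarith

-- congruence extraction
lemma modc (c a b : ℕ) (h : a % c = b % c) : (c:ℤ) ∣ (b:ℤ) - a := Nat.modEq_iff_dvd.mp h

theorem stmt15 (c k : ℕ) (hk : 2 ≤ k) (hck : k - 1 ≤ c)
    (hcop : ∀ d, 2 ≤ d → d ≤ k - 2 → Nat.Coprime c d) :
    ∀ i j i' j' u v, i < c → j < c → i' < c → j' < c → u < k → v < k → u ≠ v →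
      fcyc c i j u = fcyc c i' j' u → fcyc c i j v = fcyc c i' j' v →
      i = i' ∧ j = j' := by
  intro i j i' j' u v hi hj hi' hj' hu hv huv h1 h2
  have hc : 1 ≤ c := by omega
  unfold fcyc at h1 h2
  -- general step in the nonzero case
  have zero_case : ∀ (w : ℕ), w ≠ 0 → j = j' →
      (i + j * (w-1)) % c = (i' + j' * (w-1)) % c → i = i' ∧ j = j' := by
    intro w hw hjj h
    subst hjj
    refine ⟨?_, rfl⟩
    have hd := modc c _ _ h
    have : (c:ℤ) ∣ (i':ℤ) - i := by
      have : ((i' + j * (w-1) : ℕ) : ℤ) - ((i + j * (w-1) : ℕ) : ℤ) = (i':ℤ) - i := by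
        push_cast; ring
      rwa [this] at hd
    have := keyeq c i i' (by positivity) (by exact_mod_cast hi) (by positivity) (by exact_mod_cast hi') (dvd_sub_comm.mp this)
    exact_mod_cast this
  by_cases hu0 : u = 0
  · simp [hu0] at h1
    exact zero_case v (by omega) h1 (by simpa [if_neg (show v ≠ 0 by omega)] using h2)
  · by_cases hv0 : v = 0
    · simp [hv0] at h2
      exact zero_case u hu0 h2 (by simpa [if_neg hu0] using h1)
    · -- both nonzero
      simp only [if_neg hu0] at h1
      simp only [if_neg hv0] at h2
      have d1 := modc c _ _ h1
      have d2 := modc c _ _ h2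
      have hu1 : 1 ≤ u := by omega
      have hv1 : 1 ≤ v := by omega
      have e1 : (c:ℤ) ∣ ((i':ℤ) - i) + ((j':ℤ) - j) * ((u:ℤ) - 1) := by
        have : ((i' + j' * (u-1) : ℕ) : ℤ) - ((i + j * (u-1) : ℕ) : ℤ)
            = ((i':ℤ) - i) + ((j':ℤ) - j) * ((u:ℤ) - 1) := by
          push_cast [Nat.cast_sub hu1]; ring
        rwa [this] at d1
      have e2 : (c:ℤ) ∣ ((i':ℤ) - i) + ((j':ℤ) - j) * ((v:ℤ) - 1) := by
        have : ((i' + j' * (v-1) : ℕ) : ℤ) - ((i + j * (v-1) : ℕ) : ℤ)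
            = ((i':ℤ) - i) + ((j':ℤ) - j) * ((v:ℤ) - 1) := by
          push_cast [Nat.cast_sub hv1]; ring
        rwa [this] at d2
      have e3 : (c:ℤ) ∣ ((j':ℤ) - j) * ((u:ℤ) - v) := by
        have := dvd_sub e1 e2
        have heq : (((i':ℤ) - i) + ((j':ℤ) - j) * ((u:ℤ) - 1)) -
            (((i':ℤ) - i) + ((j':ℤ) - j) * ((v:ℤ) - 1)) = ((j':ℤ) - j) * ((u:ℤ) - v) := by ring
        rwa [heq] at this
      -- c divides (j' - j)
      set d : ℕ := max u v - min u v with hd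
      have hd1 : 1 ≤ d := by omega
      have hd2 : d ≤ k - 2 := by omega
      have e4 : (c:ℤ) ∣ ((j':ℤ) - j) * (d:ℤ) := by
        rcases le_total u v with h | h
        · have : ((j':ℤ) - j) * (d:ℤ) = -(((j':ℤ) - j) * ((u:ℤ) - v)) := by
            have : (d:ℤ) = (v:ℤ) - u := by
              have : d = v - u := by omega
              rw [this]; push_cast [Nat.cast_sub h]; ring
            rw [this]; ring
          rw [this]; exact (dvd_neg.mpr e3)
        · have : ((j':ℤ) - j) * (d:ℤ) = ((j':ℤ) - j) * ((u:ℤ) - v) := by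
            have : (d:ℤ) = (u:ℤ) - v := by
              have : d = u - v := by omega
              rw [this]; push_cast [Nat.cast_sub h]; ring
            rw [this]
          rw [this]; exact e3
      have e5 : (c:ℤ) ∣ ((j':ℤ) - j) := by
        rcases eq_or_lt_of_le hd1 with h | h
        · simpa [← h] using e4
        · have hcop' : IsCoprime (c:ℤ) (d:ℤ) :=
            Nat.isCoprime_iff_coprime.mpr (hcop d (by omega) hd2)
          exact hcop'.dvd_of_dvd_mul_right e4
      have hjj : (j:ℤ) = (j':ℤ) :=
        keyeq c j j' (by positivity) (by exact_mod_cast hj) (by positivity) (by exact_mod_cast hj') (dvd_sub_comm.mp e5)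
      have hjj' : j = j' := by exact_mod_cast hjj
      exact zero_case u hu0 hjj' h1
end

section
/- Let c, k be integers with k ≥ 2, c ≥ k − 1, and c coprime with every integer in {2, …, k−2}, and let f_c be the cyclic (c, k)-indexing family. Then the c² triangle blocks B^{i,j} = { (u·c + f_c^{i,j}(u), v·c + f_c^{i,j}(v)) : 0 ≤ v < u < k }, for (i, j) ∈ {0,…,c−1}², form a partition of the set { (u·c + p, v·c + p') : 0 ≤ v < u < k, 0 ≤ p, p' < c } of all index pairs lying in strictly subdiagonal c × c zones: every such pair belongs to exactly one block B^{i,j}. -/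
private lemma nat_eq_of_zmod {c a b : ℕ} (ha : a < c) (hb : b < c)
    (h : (a : ZMod c) = (b : ZMod c)) : a = b := by
  have h2 := (ZMod.natCast_eq_natCast_iff a b c).mp h
  rwa [Nat.ModEq, Nat.mod_eq_of_lt ha, Nat.mod_eq_of_lt hb] at h2

private lemma mod_eq_of_zmod {c a b : ℕ} (hb : b < c)
    (h : (a : ZMod c) = (b : ZMod c)) : a % c = b := by
  have h2 := (ZMod.natCast_eq_natCast_iff a b c).mp h
  rwa [Nat.ModEq, Nat.mod_eq_of_lt hb] at h2

private lemma band_unique {c u v p q : ℕ} (hp : p < c) (hq : q < c)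
    (h : u * c + p = v * c + q) : u = v ∧ p = q := by
  have hc : 0 < c := by omega
  have h1 : (p + u * c) / c = (q + v * c) / c := by
    rw [show p + u * c = q + v * c by linarith]
  rw [Nat.add_mul_div_right _ _ hc, Nat.add_mul_div_right _ _ hc,
    Nat.div_eq_of_lt hp, Nat.div_eq_of_lt hq] at h1
  have huv : u = v := by omega
  subst huv
  exact ⟨rfl, Nat.add_left_cancel h⟩

private lemma fcyc_lt {c i j u : ℕ} (hc : 0 < c) (hj : j < c) : fcyc c i j u < c := by
  unfold fcyc; split
  · exact hj
  · exact Nat.mod_lt _ hc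

theorem stmt16 (c k : ℕ) (hk : 2 ≤ k) (hck : k - 1 ≤ c)
    (hcop : ∀ d, 2 ≤ d → d ≤ k - 2 → Nat.Coprime c d) :
    ∀ u v p p', v < u → u < k → p < c → p' < c →
      ∃! ij : ℕ × ℕ, ij.1 < c ∧ ij.2 < c ∧
        ∃ u' v', v' < u' ∧ u' < k ∧
          (u * c + p, v * c + p')
            = (u' * c + fcyc c ij.1 ij.2 u', v' * c + fcyc c ij.1 ij.2 v') := by
  intro u v p p' huv huk hp hp'
  have hc : 0 < c := by omega
  haveI : NeZero c := ⟨hc.ne'⟩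
  have hu1 : 1 ≤ u := by omega
  rcases Nat.eq_zero_or_pos v with hv0 | hv1
  · -- case v = 0
    subst hv0
    set iz : ZMod c := (p : ZMod c) - (p' : ZMod c) * ((u - 1 : ℕ) : ZMod c) with hiz
    set i : ℕ := iz.val with hi
    have hicast : ((i : ℕ) : ZMod c) = iz := ZMod.natCast_rightInverse iz
    have hfu : fcyc c i p' u = p := by
      unfold fcyc
      rw [if_neg (by omega)]
      apply mod_eq_of_zmod hp
      push_cast
      rw [hicast, hiz]
      ring
    refine ⟨(i, p'), ⟨ZMod.val_lt iz, hp', u, 0, by omega, huk, by rw [hfu]; rfl⟩, ?_⟩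
    rintro ⟨i', j'⟩ ⟨hi', hj', u', v', hv'u', hu'k, heq⟩
    simp only [Prod.mk.injEq] at heq
    obtain ⟨h1, h2⟩ := heq
    obtain ⟨hu'u, hfp⟩ := band_unique hp (fcyc_lt hc hj') h1
    obtain ⟨hv'v, hfp'⟩ := band_unique hp' (fcyc_lt hc hj') h2
    subst hu'u
    have hv'0 : v' = 0 := by omega
    subst hv'0
    have hjp' : j' = p' := by simpa [fcyc] using hfp'.symm
    subst hjp'
    have hfp2 : (i' + j' * (u - 1)) % c = p := by
      have := hfp.symm
      unfold fcyc at this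
      rwa [if_neg (by omega)] at this
    have hz : ((i' : ℕ) : ZMod c) = iz := by
      have := congrArg (Nat.cast : ℕ → ZMod c) hfp2
      rw [ZMod.natCast_mod] at this
      push_cast at this
      rw [hiz]
      linear_combination this
    have : i' = i := nat_eq_of_zmod hi' (ZMod.val_lt iz) (by rw [hz, hicast])
    simp [this]
  · -- case v ≥ 1
    have hv1' : 1 ≤ v := hv1
    set d : ℕ := u - v with hd
    have hd1 : 1 ≤ d := by omega
    have hdk : d ≤ k - 2 := by omega
    have hdcop : Nat.Coprime c d := by
      rcases eq_or_lt_of_le hd1 with h1 | h2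
      · rw [← h1]; exact Nat.coprime_one_right c
      · exact hcop d h2 hdk
    set D : ZMod c := ((d : ℕ) : ZMod c) with hD
    have hunit : D * D⁻¹ = 1 := ZMod.coe_mul_inv_eq_one d hdcop.symm
    have hDsub : ((u - 1 : ℕ) : ZMod c) - ((v - 1 : ℕ) : ZMod c) = D := by
      rw [hD, hd, ← Nat.cast_sub (by omega : v - 1 ≤ u - 1)]
      congr 1
      omega
    set jz : ZMod c := D⁻¹ * ((p : ZMod c) - (p' : ZMod c)) with hjz
    set j : ℕ := jz.val with hj
    have hjcast : ((j : ℕ) : ZMod c) = jz := ZMod.natCast_rightInverse jz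
    set iz : ZMod c := (p : ZMod c) - jz * ((u - 1 : ℕ) : ZMod c) with hiz
    set i : ℕ := iz.val with hi
    have hicast : ((i : ℕ) : ZMod c) = iz := ZMod.natCast_rightInverse iz
    have hfu : fcyc c i j u = p := by
      unfold fcyc
      rw [if_neg (by omega)]
      apply mod_eq_of_zmod hp
      push_cast
      rw [hicast, hjcast, hiz]
      ring
    have hfv : fcyc c i j v = p' := by
      unfold fcyc
      rw [if_neg (by omega)]
      apply mod_eq_of_zmod hp'
      push_cast
      rw [hicast, hjcast, hiz]
      have : jz * ((u - 1 : ℕ) : ZMod c) - jz * ((v - 1 : ℕ) : ZMod c) = jz * D := by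
        rw [← mul_sub, hDsub]
      have hjD : jz * D = (p : ZMod c) - (p' : ZMod c) := by
        rw [hjz]
        calc D⁻¹ * ((p : ZMod c) - (p' : ZMod c)) * D
            = (D * D⁻¹) * ((p : ZMod c) - (p' : ZMod c)) := by ring
          _ = (p : ZMod c) - (p' : ZMod c) := by rw [hunit, one_mul]
      linear_combination - this - hjD
    refine ⟨(i, j), ⟨ZMod.val_lt iz, ZMod.val_lt jz, u, v, huv, huk, by rw [hfu, hfv]⟩, ?_⟩
    rintro ⟨i', j'⟩ ⟨hi', hj', u', v', hv'u', hu'k, heq⟩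
    simp only [Prod.mk.injEq] at heq
    obtain ⟨h1, h2⟩ := heq
    obtain ⟨hu'u, hfp⟩ := band_unique hp (fcyc_lt hc hj') h1
    obtain ⟨hv'v, hfp'⟩ := band_unique hp' (fcyc_lt hc hj') h2
    subst hu'u
    subst hv'v
    have hfp2 : (i' + j' * (u - 1)) % c = p := by
      have := hfp.symm
      unfold fcyc at this
      rwa [if_neg (by omega)] at this
    have hfp2' : (i' + j' * (v - 1)) % c = p' := by
      have := hfp'.symm
      unfold fcyc at this
      rwa [if_neg (by omega)] at this
    have e1 : ((i' : ℕ) : ZMod c) + ((j' : ℕ) : ZMod c) * ((u - 1 : ℕ) : ZMod c) = (p : ZMod c) := by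
      have := congrArg (Nat.cast : ℕ → ZMod c) hfp2
      rw [ZMod.natCast_mod] at this
      push_cast at this
      linear_combination this
    have e2 : ((i' : ℕ) : ZMod c) + ((j' : ℕ) : ZMod c) * ((v - 1 : ℕ) : ZMod c) = (p' : ZMod c) := by
      have := congrArg (Nat.cast : ℕ → ZMod c) hfp2'
      rw [ZMod.natCast_mod] at this
      push_cast at this
      linear_combination this
    have ejD : ((j' : ℕ) : ZMod c) * D = (p : ZMod c) - (p' : ZMod c) := by
      rw [← hDsub]
      linear_combination e1 - e2
    have ej : ((j' : ℕ) : ZMod c) = jz := by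
      rw [hjz]
      linear_combination D⁻¹ * ejD - ((j' : ℕ) : ZMod c) * hunit
    have hj'j : j' = j := nat_eq_of_zmod hj' (ZMod.val_lt jz) (by rw [ej, hjcast])
    have ei : ((i' : ℕ) : ZMod c) = iz := by
      rw [hiz, ← ej]
      linear_combination e1
    have hi'i : i' = i := nat_eq_of_zmod hi' (ZMod.val_lt iz) (by rw [ei, hicast])
    simp [hi'i, hj'j]
end
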